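/- In M_{7,42}, an element n is reducible (a product of two non-units of M_{7,42}) if and only if n ≡ 49 mod 294. -/

import Mathlib

/-- The arithmetical congruence monoid `M_{a,b} = {1} ∪ {n ≥ 1 : n ≡ a mod b}`. -/
def Mab (a b n : ℕ) : Prop := n = 1 ∨ (1 ≤ n ∧ n ≡ a [MOD b])

/-- `n` is reducible in `M_{a,b}`: a product of two non-unit elements. -/
def IsReducible (a b n : ℕ) : Prop :=
  ∃ m₁ m₂ : ℕ, Mab a b m₁ ∧ Mab a b m₂ ∧ m₁ ≠ 1 ∧ m₂ ≠ 1 ∧ n = m₁ * m₂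

/-- `n` is irreducible in `M_{a,b}`: a non-unit element that is not reducible. -/
def IsIrred (a b n : ℕ) : Prop := Mab a b n ∧ n ≠ 1 ∧ ¬ IsReducible a b n

/-!
For `a ∣ b`, writing two non-units as `a + b s` and `a + b t`, their product is
`a² + a b (s + t) + b² s t ≡ a² (mod a b)`. Conversely, `n ≡ a² (mod a b)` forces `a ∣ n` and
`n / a ≡ a (mod b)`, so `n = a · (n / a)` is a product of two non-units.
-/

theorem Mab.modEq_of_ne_one {a b n : ℕ} (h : Mab a b n) (hn : n ≠ 1) : n ≡ a [MOD b] :=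
  (h.resolve_left hn).2

theorem Nat.ModEq.ne_of_lt {a b m c : ℕ} (h : m ≡ a [MOD b]) (ha : a < b) (hc : c < b)
    (hca : c ≠ a) : m ≠ c := by
  rintro rfl
  exact hca (h.eq_of_lt_of_lt hc ha)

theorem mab_of_modEq {a b m : ℕ} (h : m ≡ a [MOD b]) (ha : 0 < a) (hab : a < b) : Mab a b m :=
  Or.inr ⟨Nat.one_le_iff_ne_zero.mpr (h.ne_of_lt hab (ha.trans hab) ha.ne), h⟩

theorem Nat.ModEq.mul_modEq_mul_of_dvd {a b m₁ m₂ : ℕ} (hab : a ∣ b) (h₁ : m₁ ≡ a [MOD b])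
    (h₂ : m₂ ≡ a [MOD b]) : m₁ * m₂ ≡ a * a [MOD a * b] := by
  obtain ⟨c, rfl⟩ := hab
  obtain ⟨s, hs⟩ := Nat.modEq_iff_dvd.mp h₁
  obtain ⟨t, ht⟩ := Nat.modEq_iff_dvd.mp h₂
  refine Nat.modEq_iff_dvd.mpr ⟨s + t - c * s * t, ?_⟩
  push_cast at hs ht ⊢
  linear_combination (m₂ : ℤ) * hs + (a - a * c * s) * ht

theorem modEq_sq_of_isReducible {a b n : ℕ} (hab : a ∣ b) (h : IsReducible a b n) :
    n ≡ a * a [MOD a * b] := by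
  obtain ⟨m₁, m₂, h₁, h₂, hm₁, hm₂, rfl⟩ := h
  exact (h₁.modEq_of_ne_one hm₁).mul_modEq_mul_of_dvd hab (h₂.modEq_of_ne_one hm₂)

theorem isReducible_of_modEq_sq {a b n : ℕ} (ha : 1 < a) (hab : a < b)
    (h : n ≡ a * a [MOD a * b]) : IsReducible a b n := by
  have ha₀ : 0 < a := Nat.zero_lt_one.trans ha
  obtain ⟨q, rfl⟩ : a ∣ n := (h.dvd_iff (Nat.dvd_mul_right a b)).mpr (Nat.dvd_mul_right a a)
  have hq : q ≡ a [MOD b] := Nat.ModEq.mul_left_cancel' ha₀.ne' h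
  exact ⟨a, q, mab_of_modEq rfl ha₀ hab, mab_of_modEq hq ha₀ hab, ha.ne',
    hq.ne_of_lt hab (ha.trans hab) ha.ne, rfl⟩

theorem isReducible_iff_modEq_sq {a b n : ℕ} (hab : a ∣ b) (ha : 1 < a) (hlt : a < b) :
    IsReducible a b n ↔ n ≡ a * a [MOD a * b] :=
  ⟨modEq_sq_of_isReducible hab, isReducible_of_modEq_sq ha hlt⟩

theorem stmt_16_general (n : ℕ) :
    IsReducible 7 42 n ↔ n ≡ 49 [MOD 294] :=
  isReducible_iff_modEq_sq (by norm_num) (by norm_num) (by norm_num)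

theorem stmt_16 (n : ℕ) (hn : Mab 7 42 n) :
    IsReducible 7 42 n ↔ n ≡ 49 [MOD 294] :=
  stmt_16_general n
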